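/- Let f be a Smale A-homeomorphism of a closed manifold Mⁿ all of whose source basic sets α(f) are trivial (finitely many locally hyperbolic source periodic points). Then the union of the source periodic orbits is a repelling set, and the set A(f) = ω(f) ∪ ⋃_{ν ∈ σ(f)} W^u(ν) is an attracting set, with B(α̃(f)) \ α̃(f) = B(A(f)) \ A(f), where B denotes basin. -/

import Mathlib

open Filter Topology Set Metric

section Defs

variable {X : Type*} [MetricSpace X]

/-- The non-wandering set of a homeomorphism `f`. -/
def nonWanderingSet (f : X ≃ₜ X) : Set X :=
  {p | ∀ U ∈ 𝓝 p, ∃ n : ℕ, 1 ≤ n ∧ ((⇑f)^[n] '' U ∩ U).Nonempty}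

/-- The stable set `W^s(Λ)` of an invariant set `Λ`: points whose forward orbit
converges to `Λ`. -/
def stableSetOf (f : X ≃ₜ X) (Λ : Set X) : Set X :=
  {y | Tendsto (fun k => infDist ((⇑f)^[k] y) Λ) atTop (𝓝 0)}

/-- The unstable set `W^u(Λ)` of an invariant set `Λ`: the stable set for `f⁻¹`. -/
def unstableSetOf (f : X ≃ₜ X) (Λ : Set X) : Set X :=
  stableSetOf f.symm Λ

/-- The full orbit of a point under `f`. -/
def fullOrbit (f : X ≃ₜ X) (p : X) : Set X :=
  Set.range fun k : ℤ => (f.toEquiv ^ k) p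

/-- `U` is an open trapping region for `f`. -/
def IsTrappingRegion (f : X ≃ₜ X) (U : Set X) : Prop :=
  IsOpen U ∧ f '' closure U ⊆ U

/-- The attracting set determined by a trapping region `U`. -/
def attractingSetOf (f : X ≃ₜ X) (U : Set X) : Set X :=
  ⋂ k : ℕ, (⇑f)^[k] '' U

/-- `Λ` is an attracting set of `f`: the attracting set of some trapping region. -/
def IsAttractingSet (f : X ≃ₜ X) (Λ : Set X) : Prop :=
  ∃ U, IsTrappingRegion f U ∧ Λ = attractingSetOf f U

/-- `Λ` is a repelling set of `f`: an attracting set of `f⁻¹`. -/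
def IsRepellingSet (f : X ≃ₜ X) (Λ : Set X) : Prop :=
  IsAttractingSet f.symm Λ

/-- The basin of an attracting set `A`: the union of all open trapping regions `U`
with `A_U = A`. -/
def basinOf (f : X ≃ₜ X) (A : Set X) : Set X :=
  ⋃₀ {U | IsTrappingRegion f U ∧ attractingSetOf f U = A}

/-- Topological transitivity of `f` on `Λ`: some orbit in `Λ` is dense in `Λ`. -/
def IsTransitiveOn (f : X ≃ₜ X) (Λ : Set X) : Prop :=
  ∃ x ∈ Λ, Λ ⊆ closure (fullOrbit f x)

/-- A spectral decomposition of a Smale A-homeomorphism `f`: the non-wandering set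
is a finite disjoint union of closed invariant transitive basic sets (each
consisting of hyperbolic-type points, with periodic points dense), classified into
sink basic sets (`W^u(Λ) = Λ`), source basic sets (`W^s(Λ) = Λ`) and saddle basic
sets (neither). -/
structure SmaleDecomp (f : X ≃ₜ X) where
  /-- number of sink basic sets -/
  a : ℕ
  /-- number of source basic sets -/
  b : ℕ
  /-- number of saddle basic sets -/
  c : ℕ
  /-- the sink basic sets -/
  snk : Fin a → Set X
  /-- the source basic sets -/
  src : Fin b → Set X
  /-- the saddle basic sets -/
  sad : Fin c → Set X
  snk_closed : ∀ i, IsClosed (snk i)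
  src_closed : ∀ i, IsClosed (src i)
  sad_closed : ∀ i, IsClosed (sad i)
  snk_nonempty : ∀ i, (snk i).Nonempty
  src_nonempty : ∀ i, (src i).Nonempty
  sad_nonempty : ∀ i, (sad i).Nonempty
  snk_inv : ∀ i, f '' snk i = snk i
  src_inv : ∀ i, f '' src i = src i
  sad_inv : ∀ i, f '' sad i = sad i
  snk_trans : ∀ i, IsTransitiveOn f (snk i)
  src_trans : ∀ i, IsTransitiveOn f (src i)
  sad_trans : ∀ i, IsTransitiveOn f (sad i)
  snk_pairwise : Pairwise (Function.onFun Disjoint snk)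
  src_pairwise : Pairwise (Function.onFun Disjoint src)
  sad_pairwise : Pairwise (Function.onFun Disjoint sad)
  snk_src_disj : ∀ i j, Disjoint (snk i) (src j)
  snk_sad_disj : ∀ i j, Disjoint (snk i) (sad j)
  src_sad_disj : ∀ i j, Disjoint (src i) (sad j)
  nw_eq : nonWanderingSet f = (⋃ i, snk i) ∪ (⋃ i, src i) ∪ (⋃ i, sad i)
  snk_is_sink : ∀ i, unstableSetOf f (snk i) = snk i
  src_is_source : ∀ i, stableSetOf f (src i) = src i
  sad_is_saddle : ∀ i, unstableSetOf f (sad i) ≠ sad i ∧ stableSetOf f (sad i) ≠ sad i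

/-- The union of the source basic sets `α̃(f)`. -/
def SmaleDecomp.alphaUnion {f : X ≃ₜ X} (D : SmaleDecomp f) : Set X :=
  ⋃ i, D.src i

/-- The set `A(f) = ω(f) ∪ ⋃_{ν ∈ σ(f)} W^u(ν)`: the union of the sink basic sets
and of the unstable manifolds of the saddle basic sets. -/
def SmaleDecomp.Aset {f : X ≃ₜ X} (D : SmaleDecomp f) : Set X :=
  (⋃ i, D.snk i) ∪ ⋃ i, unstableSetOf f (D.sad i)

/-- The set `R(f) = α(f) ∪ ⋃_{ν ∈ σ(f)} W^s(ν)`. -/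
def SmaleDecomp.Rset {f : X ≃ₜ X} (D : SmaleDecomp f) : Set X :=
  (⋃ i, D.src i) ∪ ⋃ i, stableSetOf f (D.sad i)

/-- A basic set is trivial if it is an (isolated) periodic orbit, equivalently if
it is finite. -/
def TrivialFamily {n : ℕ} (Λ : Fin n → Set X) : Prop :=
  ∀ i, (Λ i).Finite

end Defs

/-!
Every ω-limit set of an orbit of `f` or `f⁻¹` lies in the non-wandering set, and it cannot be
split into two disjoint closed invariant pieces, so it lies in a single basic set. Near `α̃(f)`
there is no other basic set; hence a point whose forward orbit stays near `α̃(f)` belongs to it,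
and a point whose backward orbit stays near `α̃(f)` is attracted to it. Compactness upgrades
this to stability and uniform attraction of `α̃(f)` under `f⁻¹`, and intersecting preimages of
thickenings whose radii decrease along finitely many iterates gives a trapping region `U` of
`f⁻¹` with attracting set `α̃(f)`.

The complement of `closure U` is a trapping region of `f`; its attracting set consists of the
points whose backward ω-limit set misses `α̃(f)`, which is `A(f)`. Attractor–repeller duality
then identifies the basin of each of the two sets with the complement of the other.
-/

section OrbitOmegaLimit

variable {X : Type*} [TopologicalSpace X] {g : X → X} {x : X}

abbrev orbitOmegaLimit (g : X → X) (x : X) : Set X :=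
  omegaLimit atTop (fun n : ℕ => g^[n]) {x}

theorem orbitOmegaLimit_nonempty [CompactSpace X] (g : X → X) (x : X) :
    (orbitOmegaLimit g x).Nonempty :=
  nonempty_omegaLimit _ _ _ (singleton_nonempty x)

theorem frequently_iterate_mem_of_mem_orbitOmegaLimit {y : X} (hy : y ∈ orbitOmegaLimit g x)
    {V : Set X} (hV : V ∈ 𝓝 y) : ∃ᶠ n in atTop, g^[n] x ∈ V :=
  mapClusterPt_iff_frequently.1 ((mem_omegaLimit_singleton_iff_mapClusterPt _ _ _ _).1 hy) V hV

theorem orbitOmegaLimit_subset_of_eventually_mem {C : Set X} (hC : IsClosed C)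
    (h : ∀ᶠ n in atTop, g^[n] x ∈ C) : orbitOmegaLimit g x ⊆ C := by
  obtain ⟨N, hN⟩ := eventually_atTop.1 h
  refine (omegaLimit_subset_closure_image2 _ _ _ (Ici_mem_atTop N)).trans
    (closure_minimal ?_ hC)
  rintro _ ⟨n, hn, _, rfl, rfl⟩
  exact hN n hn

theorem eventually_iterate_mem_of_orbitOmegaLimit_subset [CompactSpace X] {V : Set X}
    (hV : IsOpen V) (h : orbitOmegaLimit g x ⊆ V) : ∀ᶠ n in atTop, g^[n] x ∈ V :=
  (eventually_mapsTo_of_isOpen_of_omegaLimit_subset _ _ _ hV h).mono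
    fun _ hn => hn (mem_singleton x)

theorem orbitOmegaLimit_subset_of_subset_union [CompactSpace X] [NormalSpace X]
    (hg : Continuous g) {P Q : Set X} (hP : IsClosed P) (hQ : IsClosed Q) (hPQ : Disjoint P Q)
    (hgP : MapsTo g P P) (hsub : orbitOmegaLimit g x ⊆ P ∪ Q)
    (hmeet : (orbitOmegaLimit g x ∩ P).Nonempty) : orbitOmegaLimit g x ⊆ P := by
  obtain ⟨OP, OQ, hOP, hOQ, hPO, hQO, hO⟩ := normal_separation hP hQ hPQ
  -- once the orbit is in `W` and can only move within `W ∪ OQ`, it never reaches `OQ`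
  set W := OP ∩ g ⁻¹' OP
  have hW : IsOpen W := hOP.inter (hOP.preimage hg)
  have hPW : P ⊆ W := fun p hp => ⟨hPO hp, hPO (hgP hp)⟩
  obtain ⟨N, hN⟩ := eventually_atTop.1 <| eventually_iterate_mem_of_orbitOmegaLimit_subset
    (hW.union hOQ) (hsub.trans (union_subset_union hPW hQO))
  obtain ⟨p, hp, hpP⟩ := hmeet
  obtain ⟨k, hkN, hk⟩ := frequently_atTop.1
    (frequently_iterate_mem_of_mem_orbitOmegaLimit hp (hW.mem_nhds (hPW hpP))) N
  have hstay : ∀ m ≥ k, g^[m] x ∈ W := by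
    refine Nat.le_induction hk fun m hm ih => (hN (m + 1) (by omega)).resolve_right ?_
    rw [Function.iterate_succ_apply']
    exact disjoint_left.1 hO ih.2
  intro y hy
  by_contra hyP
  obtain ⟨m, hmk, hm⟩ := frequently_atTop.1 (frequently_iterate_mem_of_mem_orbitOmegaLimit hy
    (hOQ.mem_nhds (hQO ((hsub hy).resolve_left hyP)))) k
  exact disjoint_left.1 hO (hstay m hmk).1 hm

theorem exists_orbitOmegaLimit_subset_of_subset_iUnion [CompactSpace X] [NormalSpace X]
    (hg : Continuous g) {ι : Type*} [Finite ι] {Λ : ι → Set X} (hΛ : ∀ i, IsClosed (Λ i))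
    (hdisj : Pairwise (Function.onFun Disjoint Λ)) (hgΛ : ∀ i, MapsTo g (Λ i) (Λ i))
    (hsub : orbitOmegaLimit g x ⊆ ⋃ i, Λ i) : ∃ i, orbitOmegaLimit g x ⊆ Λ i := by
  obtain ⟨y, hy⟩ := orbitOmegaLimit_nonempty g x
  obtain ⟨i, hyi⟩ := mem_iUnion.1 (hsub hy)
  refine ⟨i, orbitOmegaLimit_subset_of_subset_union hg (hΛ i)
    (isClosed_iUnion_of_finite fun j => isClosed_iUnion_of_finite fun _ => hΛ j)
    (disjoint_iUnion₂_right.2 fun j hj => hdisj (Ne.symm hj)) (hgΛ i) ?_ ⟨y, hy, hyi⟩⟩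
  intro z hz
  obtain ⟨j, hzj⟩ := mem_iUnion.1 (hsub hz)
  by_cases hji : j = i
  · exact Or.inl (hji ▸ hzj)
  · exact Or.inr (mem_iUnion₂.2 ⟨j, hji, hzj⟩)

end OrbitOmegaLimit

section NonWandering

variable {X : Type*} [MetricSpace X] {x : X}

theorem nonWanderingSet_symm_subset (f : X ≃ₜ X) :
    nonWanderingSet f.symm ⊆ nonWanderingSet f := by
  intro p hp U hU
  obtain ⟨n, hn, _, ⟨u, hu, rfl⟩, hnu⟩ := hp U hU
  exact ⟨n, hn, u, ⟨_, hnu, (Function.LeftInverse.iterate f.apply_symm_apply n) u⟩, hu⟩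

theorem nonWanderingSet_symm (f : X ≃ₜ X) : nonWanderingSet f.symm = nonWanderingSet f :=
  (nonWanderingSet_symm_subset f).antisymm (nonWanderingSet_symm_subset f.symm)

theorem orbitOmegaLimit_subset_nonWanderingSet (f : X ≃ₜ X) (x : X) :
    orbitOmegaLimit f x ⊆ nonWanderingSet f := by
  intro y hy U hU
  have hfreq := frequently_iterate_mem_of_mem_orbitOmegaLimit hy hU
  obtain ⟨k, -, hk⟩ := frequently_atTop.1 hfreq 0
  obtain ⟨m, hmk, hm⟩ := frequently_atTop.1 hfreq (k + 1)
  refine ⟨m - k, by omega, _, ⟨_, hk, ?_⟩, hm⟩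
  rw [← Function.iterate_add_apply, Nat.sub_add_cancel (by omega)]

theorem orbitOmegaLimit_symm_subset_nonWanderingSet (f : X ≃ₜ X) (x : X) :
    orbitOmegaLimit f.symm x ⊆ nonWanderingSet f :=
  nonWanderingSet_symm f ▸ orbitOmegaLimit_subset_nonWanderingSet f.symm x

theorem mem_stableSetOf_iff_orbitOmegaLimit_subset [CompactSpace X] (f : X ≃ₜ X) {Λ : Set X}
    (hΛ : IsClosed Λ) (hne : Λ.Nonempty) : x ∈ stableSetOf f Λ ↔ orbitOmegaLimit f x ⊆ Λ := by
  constructor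
  · intro hx y hy
    refine (hΛ.mem_iff_infDist_zero hne).2 (le_antisymm ?_ infDist_nonneg)
    refine le_of_forall_gt_imp_ge_of_dense fun ε hε => ?_
    exact orbitOmegaLimit_subset_of_eventually_mem
      (isClosed_le (continuous_infDist_pt Λ) continuous_const)
      (hx.eventually (eventually_le_nhds hε)) hy
  · intro hx
    refine tendsto_order.2 ⟨fun a ha => Eventually.of_forall fun _ => ha.trans_le infDist_nonneg,
      fun ε hε => ?_⟩
    filter_upwards [eventually_iterate_mem_of_orbitOmegaLimit_subset isOpen_thickening
      (hx.trans (self_subset_thickening hε Λ))] with k hk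
    exact (mem_thickening_iff_infDist_lt hne).1 hk

end NonWandering

section TrappingRegion

theorem exists_iterate_mem_iff_of_mapsTo {α : Type*} {g : α → α} {S T : Set α} {x : α}
    (hST : S ⊆ T) (hg : MapsTo g T S) :
    (∃ k, g^[k] x ∈ T) ↔ ∃ k, g^[k] x ∈ S :=
  ⟨fun ⟨k, hk⟩ => ⟨k + 1, by rw [Function.iterate_succ_apply']; exact hg hk⟩,
    fun ⟨k, hk⟩ => ⟨k, hST hk⟩⟩

variable {X : Type*} [MetricSpace X] {h : X ≃ₜ X} {U : Set X} {x : X}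

theorem Homeomorph.symm_iterate_iterate_apply (h : X ≃ₜ X) (k : ℕ) (x : X) :
    h.symm^[k] (h^[k] x) = x :=
  (Function.LeftInverse.iterate h.symm_apply_apply k) x

theorem mem_attractingSetOf_iff : x ∈ attractingSetOf h U ↔ ∀ k, h.symm^[k] x ∈ U := by
  simp only [attractingSetOf, mem_iInter]
  exact forall_congr' fun k => mem_image_iff_of_inverse
    (Function.LeftInverse.iterate h.symm_apply_apply k)
    (Function.LeftInverse.iterate h.apply_symm_apply k)

theorem attractingSetOf_subset : attractingSetOf h U ⊆ U := fun _ hx =>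
  mem_attractingSetOf_iff.1 hx 0

namespace IsTrappingRegion

theorem mapsTo_closure (hU : IsTrappingRegion h U) : MapsTo h (closure U) U :=
  fun _ hx => hU.2 ⟨_, hx, rfl⟩

theorem mapsTo_symm_compl (hU : IsTrappingRegion h U) : MapsTo h.symm Uᶜ (closure U)ᶜ :=
  fun y hy hcl => hy (by simpa using hU.mapsTo_closure hcl)

theorem compl_closure (hU : IsTrappingRegion h U) : IsTrappingRegion h.symm (closure U)ᶜ := by
  refine ⟨isClosed_closure.isOpen_compl, ?_⟩
  rintro _ ⟨y, hy, rfl⟩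
  exact hU.mapsTo_symm_compl
    (closure_minimal (compl_subset_compl.2 subset_closure) hU.1.isClosed_compl hy)

theorem preimage_attractingSetOf (hU : IsTrappingRegion h U) :
    h ⁻¹' attractingSetOf h U = attractingSetOf h U := by
  ext x
  simp only [mem_preimage, mem_attractingSetOf_iff]
  have hshift : ∀ k, h.symm^[k + 1] (h x) = h.symm^[k] x := fun k => by
    rw [Function.iterate_succ_apply, h.symm_apply_apply]
  refine ⟨fun hx k => hshift k ▸ hx (k + 1), fun hx k => ?_⟩
  cases k with
  | zero => exact hU.mapsTo_closure (subset_closure (hx 0))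
  | succ k => exact (hshift k).symm ▸ hx k

theorem preimage_iterate_attractingSetOf (hU : IsTrappingRegion h U) (k : ℕ) :
    h^[k] ⁻¹' attractingSetOf h U = attractingSetOf h U := by
  induction k with
  | zero => rfl
  | succ k ih => rw [Function.iterate_succ, preimage_comp, ih, hU.preimage_attractingSetOf]

theorem preimage_iterate (hU : IsTrappingRegion h U) (k : ℕ) :
    IsTrappingRegion h (h^[k] ⁻¹' U) := by
  refine ⟨hU.1.preimage (h.continuous.iterate k), ?_⟩
  rintro _ ⟨y, hy, rfl⟩
  rw [mem_preimage, ← Function.iterate_succ_apply, Function.iterate_succ_apply']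
  exact hU.mapsTo_closure ((h.continuous.iterate k).closure_preimage_subset U hy)

theorem attractingSetOf_preimage_iterate (hU : IsTrappingRegion h U) (k : ℕ) :
    attractingSetOf h (h^[k] ⁻¹' U) = attractingSetOf h U := by
  have hcomm : ∀ j y, h^[k] (h.symm^[j] y) = h.symm^[j] (h^[k] y) := fun j =>
    (Function.Commute.iterate_iterate (fun y => by simp) k j)
  ext x
  rw [← hU.preimage_iterate_attractingSetOf k]
  simp only [mem_preimage, mem_attractingSetOf_iff, hcomm]

theorem orbitOmegaLimit_subset [CompactSpace X] (hU : IsTrappingRegion h U) {k : ℕ}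
    (hk : h^[k] x ∈ closure U) :
    orbitOmegaLimit h x ⊆ attractingSetOf h U := by
  have hcl : MapsTo h (closure U) (closure U) := hU.mapsTo_closure.mono_right subset_closure
  have hj : ∀ j, orbitOmegaLimit h x ⊆ h^[j] '' closure U := fun j => by
    refine orbitOmegaLimit_subset_of_eventually_mem
      (isClosed_closure.isCompact.image (h.continuous.iterate j)).isClosed ?_
    filter_upwards [eventually_ge_atTop (k + j)] with m hm
    refine ⟨h^[m - j] x, ?_, ?_⟩
    · rw [show m - j = (m - j - k) + k by omega, Function.iterate_add_apply]
      exact hcl.iterate _ hk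
    · rw [← Function.iterate_add_apply, Nat.add_sub_cancel' (by omega)]
  intro z hz
  refine mem_iInter.2 fun j => ?_
  obtain ⟨y, hy, rfl⟩ := hj (j + 1) hz
  exact ⟨h y, hU.mapsTo_closure hy, by rw [Function.iterate_succ_apply]⟩

theorem basinOf_eq [CompactSpace X] (hU : IsTrappingRegion h U) :
    basinOf h (attractingSetOf h U) = {x | ∃ k, h^[k] x ∈ U} := by
  ext x
  constructor
  · rintro ⟨W, ⟨hW, hWU⟩, hxW⟩
    have hω : orbitOmegaLimit h x ⊆ U :=
      (hW.orbitOmegaLimit_subset (k := 0) (subset_closure hxW)).trans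
        (hWU ▸ attractingSetOf_subset)
    exact (eventually_iterate_mem_of_orbitOmegaLimit_subset hU.1 hω).exists
  · rintro ⟨k, hk⟩
    exact ⟨_, ⟨hU.preimage_iterate k, hU.attractingSetOf_preimage_iterate k⟩, hk⟩

theorem mem_attractingSetOf_compl_closure_iff [CompactSpace X] (hU : IsTrappingRegion h U) :
    x ∈ attractingSetOf h.symm (closure U)ᶜ ↔
      Disjoint (orbitOmegaLimit h x) (attractingSetOf h U) := by
  rw [mem_attractingSetOf_iff, Homeomorph.symm_symm]
  constructor
  · intro hx
    refine disjoint_left.2 fun z hz hzU => ?_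
    refine orbitOmegaLimit_subset_of_eventually_mem hU.1.isClosed_compl
      (Eventually.of_forall fun k => ?_) hz (attractingSetOf_subset hzU)
    exact fun hkU => hx k (subset_closure hkU)
  · intro hx k hk
    obtain ⟨z, hz⟩ := orbitOmegaLimit_nonempty h x
    exact disjoint_left.1 hx hz (hU.orbitOmegaLimit_subset hk hz)

theorem basinOf_eq_compl [CompactSpace X] (hU : IsTrappingRegion h U) :
    basinOf h (attractingSetOf h U) = (attractingSetOf h.symm (closure U)ᶜ)ᶜ := by
  ext x
  rw [hU.basinOf_eq, mem_ofPred_eq, mem_compl_iff, mem_attractingSetOf_iff, Homeomorph.symm_symm,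
    ← exists_iterate_mem_iff_of_mapsTo subset_closure hU.mapsTo_closure]
  simp

theorem basinOf_compl_closure_eq [CompactSpace X] (hU : IsTrappingRegion h U) :
    basinOf h.symm (attractingSetOf h.symm (closure U)ᶜ) = (attractingSetOf h U)ᶜ := by
  ext x
  rw [hU.compl_closure.basinOf_eq, mem_ofPred_eq, mem_compl_iff, mem_attractingSetOf_iff,
    ← exists_iterate_mem_iff_of_mapsTo (compl_subset_compl.2 subset_closure) hU.mapsTo_symm_compl]
  simp

end IsTrappingRegion

end TrappingRegion

theorem IsCompact.exists_forall_exists_iterate_mem_le {X : Type*} [TopologicalSpace X]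
    {g : X → X} (hg : Continuous g) {K V : Set X} (hK : IsCompact K) (hV : IsOpen V)
    (h : ∀ x ∈ K, ∃ n, g^[n] x ∈ V) : ∃ N, ∀ x ∈ K, ∃ n ≤ N, g^[n] x ∈ V := by
  obtain ⟨t, ht⟩ := hK.elim_finite_subcover (fun n => g^[n] ⁻¹' V)
    (fun n => hV.preimage (hg.iterate n)) fun x hx => mem_iUnion.2 (h x hx)
  refine ⟨t.sup id, fun x hx => ?_⟩
  obtain ⟨n, hn, hnx⟩ := mem_iUnion₂.1 (ht hx)
  exact ⟨n, Finset.le_sup (f := id) hn, hnx⟩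

section AttractorCriterion

variable {X : Type*} [MetricSpace X] {h : X ≃ₜ X} {Λ : Set X}

theorem IsCompact.exists_forall_le_iterate_mem_thickening {g : X → X} (hg : Continuous g)
    (hΛ : IsCompact Λ) (hgΛ : MapsTo g Λ Λ) {ε : ℝ} (hε : 0 < ε) (J : ℕ) :
    ∃ δ > 0, ∀ x ∈ thickening δ Λ, ∀ i ≤ J, g^[i] x ∈ thickening ε Λ := by
  obtain ⟨δ, hδ, hδΛ⟩ := hΛ.exists_thickening_subset_open
    ((finite_Iic J).isOpen_biInter fun i _ => isOpen_thickening.preimage (hg.iterate i))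
    fun y hy => mem_iInter₂.2 fun i _ => self_subset_thickening hε Λ (hgΛ.iterate i hy)
  exact ⟨δ, hδ, fun x hx i hi => mem_iInter₂.1 (hδΛ hx) i hi⟩

variable {ε₀ : ℝ}

theorem exists_forall_iterate_mem_thickening [CompactSpace X] (hΛ : IsClosed Λ)
    (hinv : h ⁻¹' Λ = Λ)
    (habs : ∀ y, (∀ k, h.symm^[k] y ∈ cthickening ε₀ Λ) → y ∈ Λ)
    {ε : ℝ} (hε : 0 < ε) (hεε₀ : ε ≤ ε₀) :
    ∃ δ > 0, ∀ x ∈ thickening δ Λ, ∀ k, h^[k] x ∈ thickening ε Λ := by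
  have hexit : ∀ y ∈ (thickening ε Λ)ᶜ, ∃ n, h.symm^[n] y ∈ h.symm ⁻¹' (cthickening ε Λ)ᶜ := by
    intro y hy
    by_contra! hstay
    have hy' : h.symm y ∈ Λ := habs _ fun k => cthickening_mono hεε₀ _ (by
      simpa [← Function.iterate_succ_apply, Function.iterate_succ_apply'] using hstay k)
    rw [← hinv, mem_preimage, h.apply_symm_apply] at hy'
    exact hy (self_subset_thickening hε Λ hy')
  obtain ⟨J, hJ⟩ := isOpen_thickening.isClosed_compl.isCompact.exists_forall_exists_iterate_mem_le
    h.symm.continuous (isClosed_cthickening.isOpen_compl.preimage h.symm.continuous) hexit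
  obtain ⟨δ, hδ, hδJ⟩ := hΛ.isCompact.exists_forall_le_iterate_mem_thickening h.continuous
    (fun y hy => by rwa [← hinv] at hy) hε J
  -- a point outside `thickening ε Λ` leaves `cthickening ε Λ` under `h⁻¹` within `J + 1` steps,
  -- so a first exit from `thickening ε Λ` happens by time `J`
  refine ⟨δ, hδ, fun x hx k => ?_⟩
  induction k using Nat.strong_induction_on with
  | _ k ih =>
    by_cases hkJ : k ≤ J
    · exact hδJ x hx k hkJ
    by_contra hk
    obtain ⟨n, hnJ, hn⟩ := hJ _ hk
    obtain ⟨j, rfl⟩ := Nat.exists_eq_add_of_le (show n + 1 ≤ k by omega)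
    rw [mem_preimage, ← Function.iterate_succ_apply' (f := h.symm), Function.iterate_add_apply,
      Homeomorph.symm_iterate_iterate_apply] at hn
    exact hn (thickening_subset_cthickening _ _ (ih j (by omega)))

theorem exists_forall_ge_iterate_mem_thickening_half [CompactSpace X] (hΛ : IsClosed Λ)
    (hinv : h ⁻¹' Λ = Λ) (hε₀ : 0 < ε₀)
    (habs : ∀ y, (∀ k, h.symm^[k] y ∈ cthickening ε₀ Λ) → y ∈ Λ)
    (hatt : ∀ z, (∀ k, h^[k] z ∈ cthickening ε₀ Λ) → orbitOmegaLimit h z ⊆ Λ) :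
    ∃ r > 0, r ≤ ε₀ ∧ ∃ N, ∀ z ∈ cthickening r Λ, ∀ m ≥ N, h^[m] z ∈ thickening (r / 2) Λ := by
  obtain ⟨δ₀, hδ₀, hδ₀ε₀⟩ := exists_forall_iterate_mem_thickening hΛ hinv habs hε₀ le_rfl
  set r := min δ₀ ε₀ / 2 with hr
  have hr₀ : 0 < r := by positivity
  have hrδ₀ : r < δ₀ := by rw [hr]; linarith [min_le_left δ₀ ε₀]
  have hrε₀ : r ≤ ε₀ := by rw [hr]; linarith [min_le_right δ₀ ε₀]
  obtain ⟨δ₁, hδ₁, hδ₁r⟩ := exists_forall_iterate_mem_thickening hΛ hinv habs (half_pos hr₀)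
    (by linarith)
  have hK : cthickening r Λ ⊆ thickening δ₀ Λ := cthickening_subset_thickening' hδ₀ hrδ₀ Λ
  have henter : ∀ z ∈ cthickening r Λ, ∃ n, h^[n] z ∈ thickening δ₁ Λ := fun z hz =>
    (eventually_iterate_mem_of_orbitOmegaLimit_subset isOpen_thickening
      ((hatt z fun k => thickening_subset_cthickening _ _ (hδ₀ε₀ z (hK hz) k)).trans
        (self_subset_thickening hδ₁ Λ))).exists
  obtain ⟨N, hN⟩ := isClosed_cthickening.isCompact.exists_forall_exists_iterate_mem_le
    h.continuous isOpen_thickening henter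
  refine ⟨r, hr₀, hrε₀, N, fun z hz m hm => ?_⟩
  obtain ⟨n, hnN, hn⟩ := hN z hz
  rw [show m = (m - n) + n by omega, Function.iterate_add_apply]
  exact hδ₁r _ hn _

theorem isTrappingRegion_biInter_preimage_iterate {W : ℕ → Set X} (hW : ∀ k, IsOpen (W k))
    (hWsucc : ∀ k, closure (W (k + 1)) ⊆ W k) {N : ℕ}
    (hN : MapsTo (h^[N + 1]) (closure (W 0)) (W N)) :
    IsTrappingRegion h (⋂ k ∈ Iic N, h^[k] ⁻¹' W k) := by
  refine ⟨(finite_Iic N).isOpen_biInter fun k _ => (hW k).preimage (h.continuous.iterate k), ?_⟩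
  rintro _ ⟨z, hz, rfl⟩
  have hzk : ∀ k ≤ N, h^[k] z ∈ closure (W k) := fun k hk =>
    (h.continuous.iterate k).closure_preimage_subset _
      (closure_mono (biInter_subset_of_mem (mem_Iic.2 hk)) hz)
  refine mem_iInter₂.2 fun k hk => ?_
  rw [mem_preimage, ← Function.iterate_succ_apply]
  rcases (mem_Iic.1 hk).lt_or_eq with hkN | rfl
  · exact hWsucc k (hzk (k + 1) hkN)
  · exact hN (by simpa using hzk 0 (Nat.zero_le _))

theorem isAttractingSet_of_forall_iterate_mem_cthickening [CompactSpace X] (hΛ : IsClosed Λ)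
    (hinv : h ⁻¹' Λ = Λ) (hε₀ : 0 < ε₀)
    (habs : ∀ y, (∀ k, h.symm^[k] y ∈ cthickening ε₀ Λ) → y ∈ Λ)
    (hatt : ∀ z, (∀ k, h^[k] z ∈ cthickening ε₀ Λ) → orbitOmegaLimit h z ⊆ Λ) :
    IsAttractingSet h Λ := by
  obtain ⟨r, hr, hrε₀, N, hN⟩ :=
    exists_forall_ge_iterate_mem_thickening_half hΛ hinv hε₀ habs hatt
  -- any radii decreasing strictly from `r` and staying above `r / 2` would do
  set ρ : ℕ → ℝ := fun k => r / 2 + r / (2 * (k + 1)) with hρ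
  have hρ_pos : ∀ k, 0 < ρ k := fun k => by positivity
  have hρ_succ : ∀ k, ρ (k + 1) < ρ k := fun k => by
    simp only [hρ]
    gcongr
    linarith
  have htrap := isTrappingRegion_biInter_preimage_iterate (h := h)
    (W := fun k => thickening (ρ k) Λ) (fun k => isOpen_thickening)
    (fun k => (closure_thickening_subset_cthickening _ _).trans
      (cthickening_subset_thickening' (hρ_pos k) (hρ_succ k) Λ))
    (N := N) fun z hz => thickening_mono (le_add_of_nonneg_right (by positivity)) Λ
      (hN z (by simpa [hρ] using closure_thickening_subset_cthickening _ _ hz) _ (by omega))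
  have hmaps : MapsTo h Λ Λ := fun y hy => by rwa [← hinv] at hy
  have hmaps_symm : MapsTo h.symm Λ Λ := fun y hy => by
    rwa [← hinv, mem_preimage, h.apply_symm_apply]
  refine ⟨_, htrap, subset_antisymm (fun z hz => ?_) fun z hz => habs z fun k => ?_⟩
  · exact mem_attractingSetOf_iff.2 fun k => mem_iInter₂.2 fun j _ =>
      self_subset_thickening (hρ_pos j) Λ (hmaps.iterate j (hmaps_symm.iterate k hz))
  · have hk := mem_iInter₂.1 (mem_attractingSetOf_iff.1 hz k) 0 (Nat.zero_le N)
    refine thickening_subset_cthickening_of_le ?_ Λ hk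
    simp only [hρ]
    linarith

end AttractorCriterion

theorem Homeomorph.mapsTo_symm_of_image_eq {X : Type*} [TopologicalSpace X] (f : X ≃ₜ X)
    {S : Set X} (hS : f '' S = S) : MapsTo f.symm S S := by
  intro y hy
  rw [← hS] at hy
  obtain ⟨z, hz, rfl⟩ := hy
  rwa [f.symm_apply_apply]

namespace SmaleDecomp

variable {X : Type*} [MetricSpace X] {f : X ≃ₜ X} (D : SmaleDecomp f)

def sinkSaddleUnion : Set X :=
  (⋃ i, D.snk i) ∪ ⋃ i, D.sad i

theorem isClosed_alphaUnion : IsClosed D.alphaUnion :=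
  isClosed_iUnion_of_finite D.src_closed

theorem isClosed_sinkSaddleUnion : IsClosed D.sinkSaddleUnion :=
  (isClosed_iUnion_of_finite D.snk_closed).union (isClosed_iUnion_of_finite D.sad_closed)

theorem image_alphaUnion : f '' D.alphaUnion = D.alphaUnion := by
  rw [alphaUnion, image_iUnion]
  exact iUnion_congr D.src_inv

theorem disjoint_alphaUnion_sinkSaddleUnion : Disjoint D.alphaUnion D.sinkSaddleUnion := by
  simp only [alphaUnion, sinkSaddleUnion, disjoint_union_right, disjoint_iUnion_left,
    disjoint_iUnion_right]
  exact ⟨fun i j => (D.snk_src_disj i j).symm, fun i j => D.src_sad_disj j i⟩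

theorem nonWanderingSet_eq : nonWanderingSet f = D.alphaUnion ∪ D.sinkSaddleUnion := by
  rw [D.nw_eq, alphaUnion, sinkSaddleUnion]
  ext
  simp only [mem_union]
  tauto

theorem exists_cthickening_disjoint_sinkSaddleUnion [CompactSpace X] :
    ∃ ε₀ > 0, Disjoint (cthickening ε₀ D.alphaUnion) D.sinkSaddleUnion := by
  obtain ⟨ε₀, hε₀, hsub⟩ := D.isClosed_alphaUnion.isCompact.exists_cthickening_subset_open
    D.isClosed_sinkSaddleUnion.isOpen_compl
    (subset_compl_iff_disjoint_right.2 D.disjoint_alphaUnion_sinkSaddleUnion)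
  exact ⟨ε₀, hε₀, subset_compl_iff_disjoint_right.1 hsub⟩

theorem mem_alphaUnion_of_orbitOmegaLimit_subset [CompactSpace X] {y : X}
    (hy : orbitOmegaLimit f y ⊆ D.alphaUnion) : y ∈ D.alphaUnion := by
  obtain ⟨i, hi⟩ := exists_orbitOmegaLimit_subset_of_subset_iUnion f.continuous D.src_closed
    D.src_pairwise (fun i => image_subset_iff.1 (D.src_inv i).subset) hy
  have hyi := (mem_stableSetOf_iff_orbitOmegaLimit_subset f (D.src_closed i)
    (D.src_nonempty i)).2 hi
  rw [D.src_is_source i] at hyi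
  exact mem_iUnion.2 ⟨i, hyi⟩

theorem Aset_eq [CompactSpace X] :
    D.Aset = {x | orbitOmegaLimit f.symm x ⊆ D.sinkSaddleUnion} := by
  ext x
  constructor
  · rintro (hx | hx) <;> obtain ⟨i, hi⟩ := mem_iUnion.1 hx
    · refine (orbitOmegaLimit_subset_of_eventually_mem (D.snk_closed i) (Eventually.of_forall
        fun k => (f.mapsTo_symm_of_image_eq (D.snk_inv i)).iterate k hi)).trans ?_
      exact subset_union_of_subset_left (subset_iUnion _ i) _
    · rw [unstableSetOf, mem_stableSetOf_iff_orbitOmegaLimit_subset f.symm (D.sad_closed i)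
        (D.sad_nonempty i)] at hi
      exact hi.trans (subset_union_of_subset_right (subset_iUnion _ i) _)
  · intro hx
    have hsub : orbitOmegaLimit f.symm x ⊆ ⋃ i, Sum.elim D.snk D.sad i := by
      simpa [iUnion_sum, sinkSaddleUnion] using hx
    obtain ⟨i | i, hi⟩ := exists_orbitOmegaLimit_subset_of_subset_iUnion f.symm.continuous
      (Λ := Sum.elim D.snk D.sad) (by rintro (i | i); exacts [D.snk_closed i, D.sad_closed i])
      (by
        rintro (i | i) (j | j) hij
        · exact D.snk_pairwise fun h => hij (congrArg _ h)
        · exact D.snk_sad_disj i j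
        · exact (D.snk_sad_disj j i).symm
        · exact D.sad_pairwise fun h => hij (congrArg _ h))
      (by rintro (i | i); exacts [f.mapsTo_symm_of_image_eq (D.snk_inv i),
        f.mapsTo_symm_of_image_eq (D.sad_inv i)]) hsub
    · rw [Sum.elim_inl, ← mem_stableSetOf_iff_orbitOmegaLimit_subset f.symm (D.snk_closed i)
        (D.snk_nonempty i), ← unstableSetOf, D.snk_is_sink i] at hi
      exact Or.inl (mem_iUnion.2 ⟨i, hi⟩)
    · rw [Sum.elim_inr, ← mem_stableSetOf_iff_orbitOmegaLimit_subset f.symm (D.sad_closed i)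
        (D.sad_nonempty i)] at hi
      exact Or.inr (mem_iUnion.2 ⟨i, hi⟩)

theorem isRepellingSet_alphaUnion [CompactSpace X] : IsRepellingSet f D.alphaUnion := by
  obtain ⟨ε₀, hε₀, hdisj⟩ := D.exists_cthickening_disjoint_sinkSaddleUnion
  have hnear : ∀ {g : X → X} {x : X}, orbitOmegaLimit g x ⊆ nonWanderingSet f →
      (∀ k, g^[k] x ∈ cthickening ε₀ D.alphaUnion) → orbitOmegaLimit g x ⊆ D.alphaUnion := by
    intro g x hΩ hx z hz
    have hzN := orbitOmegaLimit_subset_of_eventually_mem isClosed_cthickening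
      (Eventually.of_forall hx) hz
    exact ((D.nonWanderingSet_eq ▸ hΩ hz).resolve_right (disjoint_left.1 hdisj hzN))
  refine isAttractingSet_of_forall_iterate_mem_cthickening D.isClosed_alphaUnion
    (by rw [f.preimage_symm]; exact D.image_alphaUnion) hε₀
    (fun y hy => D.mem_alphaUnion_of_orbitOmegaLimit_subset
      (hnear (orbitOmegaLimit_subset_nonWanderingSet f y) hy))
    fun z hz => hnear (orbitOmegaLimit_symm_subset_nonWanderingSet f z) hz

theorem Aset_eq_attractingSetOf [CompactSpace X] {U : Set X}
    (hU : IsTrappingRegion f.symm U) (hUα : D.alphaUnion = attractingSetOf f.symm U) :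
    D.Aset = attractingSetOf f (closure U)ᶜ := by
  ext x
  rw [D.Aset_eq, mem_ofPred_eq]
  refine Iff.trans ?_ hU.mem_attractingSetOf_compl_closure_iff.symm
  rw [← hUα]
  have hΩ := D.nonWanderingSet_eq ▸ orbitOmegaLimit_symm_subset_nonWanderingSet f x
  constructor
  · exact fun hx => D.disjoint_alphaUnion_sinkSaddleUnion.symm.mono_left hx
  · exact fun hx z hz => (hΩ hz).resolve_left (disjoint_left.1 hx hz)

end SmaleDecomp

theorem alpha_repelling_A_attracting_same_basin_complement_general
    {X : Type*} [MetricSpace X] [CompactSpace X] (f : X ≃ₜ X) (D : SmaleDecomp f) :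
    IsRepellingSet f D.alphaUnion ∧ IsAttractingSet f D.Aset ∧
      basinOf f.symm D.alphaUnion \ D.alphaUnion = basinOf f D.Aset \ D.Aset := by
  obtain ⟨U, hU, hUα⟩ := D.isRepellingSet_alphaUnion
  have hA := D.Aset_eq_attractingSetOf hU hUα
  refine ⟨⟨U, hU, hUα⟩, ⟨_, hU.compl_closure, hA⟩, ?_⟩
  have hbasin_α : basinOf f.symm D.alphaUnion = D.Asetᶜ := by
    rw [hUα, hU.basinOf_eq_compl, f.symm_symm, hA]
  have hbasin_A : basinOf f D.Aset = D.alphaUnionᶜ := by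
    rw [hA, hUα]
    exact hU.basinOf_compl_closure_eq
  rw [hbasin_α, hbasin_A, sdiff_eq, sdiff_eq, inter_comm]

/-- Let `f` be a Smale A-homeomorphism of a closed manifold all of whose source
basic sets are trivial. Then the union `α̃(f)` of the source orbits is a repelling
set, `A(f)` is an attracting set, and `B(α̃(f)) \ α̃(f) = B(A(f)) \ A(f)`, where
the basin of the repelling set `α̃(f)` is its basin as an attracting set of `f⁻¹`. -/
theorem alpha_repelling_A_attracting_same_basin_complement
    {X : Type*} [MetricSpace X] [CompactSpace X] (f : X ≃ₜ X) (D : SmaleDecomp f)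
    (hsrc : TrivialFamily D.src) :
    IsRepellingSet f D.alphaUnion ∧ IsAttractingSet f D.Aset ∧
      basinOf f.symm D.alphaUnion \ D.alphaUnion = basinOf f D.Aset \ D.Aset :=
  alpha_repelling_A_attracting_same_basin_complement_general f D
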